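/- arXiv:1504.00348 — 2 statements merged into one kernel-verified Lean document; each statement's English description precedes it below -/
import Mathlib

section
/- Let $\mu : \mathbb{R} \to [0,\infty)$ be an even function that is bounded, integrable, and nonincreasing on $[0,\infty)$. Then there exists a constant $c > 0$ depending only on $\mu$ such that for all $x, y \in \mathbb{R}$, $\sum_{\nu \in \mathbb{Z}} \mu(x - \nu)\,\mu(y - \nu) \le c\,\mu(|x - y|/2)$. In fact one may take $c = 2(2\mu(0) + \int_{\mathbb{R}} \mu)$. -/
open MeasureTheory

section Aux

variable {μ : ℝ → ℝ}

/-- Partial sums of `μ (r + k)` are bounded by `μ 0 + ∫ μ`. -/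
lemma aux_sum_range_le (hpos : ∀ t, 0 ≤ μ t) (hint : Integrable μ)
    (hmono : ∀ s t, 0 ≤ s → s ≤ t → μ t ≤ μ s) {r : ℝ} (hr : 0 ≤ r) (n : ℕ) :
    ∑ k ∈ Finset.range n, μ (r + k) ≤ μ 0 + ∫ t, μ t := by
  have hI : 0 ≤ ∫ t, μ t := integral_nonneg hpos
  cases n with
  | zero => simpa using add_nonneg (hpos 0) hI
  | succ m =>
    rw [Finset.sum_range_succ']
    have h1 : μ (r + (0 : ℕ)) ≤ μ 0 := by
      simpa using hmono 0 r le_rfl hr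
    have h2 : ∀ k ∈ Finset.range m, μ (r + (k + 1 : ℕ)) ≤ ∫ t in (r + k)..(r + (k + 1)), μ t := by
      intro k _
      have hle : r + (k : ℝ) ≤ r + (k + 1) := by linarith
      have hc : ∫ t in (r + k)..(r + (k + 1)), μ (r + (k + 1 : ℕ)) =
          μ (r + (k + 1 : ℕ)) := by
        rw [intervalIntegral.integral_const]
        push_cast
        ring_nf
      calc μ (r + (k + 1 : ℕ)) = ∫ t in (r + k)..(r + (k + 1)), μ (r + (k + 1 : ℕ)) := hc.symm
        _ ≤ ∫ t in (r + k)..(r + (k + 1)), μ t := by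
            apply intervalIntegral.integral_mono_on hle
              (intervalIntegrable_const) (hint.intervalIntegrable)
            intro t ht
            have := hmono t (r + (k + 1 : ℕ)) (le_trans (by positivity) ht.1)
              (by push_cast; linarith [ht.2])
            exact this
    have h3 : ∑ k ∈ Finset.range m, μ (r + (k + 1 : ℕ)) ≤
        ∑ k ∈ Finset.range m, ∫ t in (r + k)..(r + (k + 1)), μ t :=
      Finset.sum_le_sum h2
    have h4 : ∑ k ∈ Finset.range m, ∫ t in (r + (k:ℕ))..(r + ((k:ℕ) + 1)), μ t =
        ∫ t in r..(r + m), μ t := by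
      have := intervalIntegral.sum_integral_adjacent_intervals
        (a := fun k : ℕ => r + k) (n := m)
        (fun k _ => hint.intervalIntegrable)
      simpa using this
    have h5 : ∫ t in r..(r + m), μ t ≤ ∫ t, μ t := by
      rw [intervalIntegral.integral_of_le (by linarith [Nat.cast_nonneg (α := ℝ) m])]
      exact setIntegral_le_integral hint (Filter.Eventually.of_forall hpos)
    calc (∑ k ∈ Finset.range m, μ (r + (k + 1 : ℕ))) + μ (r + (0 : ℕ))
        ≤ (∫ t in r..(r + m), μ t) + μ 0 := by
          rw [← h4]; push_cast at h3 h1 ⊢; exact add_le_add h3 h1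
      _ ≤ μ 0 + ∫ t, μ t := by linarith

lemma aux_nat_summable (hpos : ∀ t, 0 ≤ μ t) (hint : Integrable μ)
    (hmono : ∀ s t, 0 ≤ s → s ≤ t → μ t ≤ μ s) {r : ℝ} (hr : 0 ≤ r) :
    Summable (fun k : ℕ => μ (r + k)) :=
  summable_of_sum_range_le (fun k => hpos _) (aux_sum_range_le hpos hint hmono hr)

lemma aux_nat_tsum_le (hpos : ∀ t, 0 ≤ μ t) (hint : Integrable μ)
    (hmono : ∀ s t, 0 ≤ s → s ≤ t → μ t ≤ μ s) {r : ℝ} (hr : 0 ≤ r) :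
    ∑' k : ℕ, μ (r + k) ≤ μ 0 + ∫ t, μ t :=
  Real.tsum_le_of_sum_range_le (fun k => hpos _) (aux_sum_range_le hpos hint hmono hr)

/-- The translate sum over ℤ is summable and bounded. -/
lemma aux_int (hpos : ∀ t, 0 ≤ μ t) (heven : ∀ t, μ (-t) = μ t) (hint : Integrable μ)
    (hmono : ∀ s t, 0 ≤ s → s ≤ t → μ t ≤ μ s) (x : ℝ) :
    Summable (fun ν : ℤ => μ (x - ν)) ∧
      ∑' ν : ℤ, μ (x - ν) ≤ 2 * (μ 0 + ∫ t, μ t) := by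
  set f := Int.fract x with hf
  have hf0 : 0 ≤ f := Int.fract_nonneg x
  have hf1 : f < 1 := Int.fract_lt_one x
  -- reindex by the equivalence k ↦ ⌊x⌋ - k
  have hkey : ∀ k : ℤ, μ (x - ((Equiv.subLeft (⌊x⌋ : ℤ)) k : ℤ)) = μ (f + k) := by
    intro k
    have : x - ((⌊x⌋ : ℤ) - k : ℤ) = f + k := by
      push_cast [hf, Int.fract]
      ring
    simp only [Equiv.subLeft_apply, this]
  set F : ℤ → ℝ := fun k => μ (f + k) with hF
  have hcast1 : ∀ n : ℕ, F (n : ℤ) = μ (f + n) := by intro n; simp [hF]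
  have hcast2 : ∀ n : ℕ, F (-((n : ℤ) + 1)) = μ ((1 - f) + n) := by
    intro n
    have h1 : ((1 : ℝ) - f) + n = -(f + ((-((n : ℤ) + 1)) : ℤ)) := by push_cast; ring
    simp only [hF]
    rw [h1, heven]
  have hposnat : Summable (fun n : ℕ => F (n : ℤ)) :=
    (aux_nat_summable hpos hint hmono hf0).congr fun n => (hcast1 n).symm
  have hnegnat : Summable (fun n : ℕ => F (-((n : ℤ) + 1))) :=
    (aux_nat_summable hpos hint hmono (by linarith : (0:ℝ) ≤ 1 - f)).congr
      fun n => (hcast2 n).symm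
  have hsumF : Summable F := Summable.of_nat_of_neg_add_one hposnat hnegnat
  have htsumF : ∑' k : ℤ, F k ≤ 2 * (μ 0 + ∫ t, μ t) := by
    rw [tsum_of_nat_of_neg_add_one hposnat hnegnat]
    have h1 : ∑' n : ℕ, F (n : ℤ) ≤ μ 0 + ∫ t, μ t := by
      rw [tsum_congr hcast1]; exact aux_nat_tsum_le hpos hint hmono hf0
    have h2 : ∑' n : ℕ, F (-((n : ℤ) + 1)) ≤ μ 0 + ∫ t, μ t := by
      rw [tsum_congr hcast2]
      exact aux_nat_tsum_le hpos hint hmono (by linarith)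
    linarith
  constructor
  · rw [← (Equiv.subLeft (⌊x⌋ : ℤ)).summable_iff]
    exact hsumF.congr fun k => (hkey k).symm
  · calc ∑' ν : ℤ, μ (x - ν) = ∑' k : ℤ, μ (x - ((Equiv.subLeft (⌊x⌋ : ℤ)) k : ℤ)) :=
        ((Equiv.subLeft (⌊x⌋ : ℤ)).tsum_eq (fun ν : ℤ => μ (x - ν))).symm
      _ = ∑' k : ℤ, F k := tsum_congr hkey
      _ ≤ 2 * (μ 0 + ∫ t, μ t) := htsumF

lemma aux_abs (heven : ∀ t, μ (-t) = μ t) (t : ℝ) : μ t = μ |t| := by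
  rcases abs_cases t with ⟨h, _⟩ | ⟨h, _⟩
  · rw [h]
  · rw [← heven t, ← h]

end Aux

/-- Pointwise product bound for sums of translates. -/
theorem stmt4 (μ : ℝ → ℝ) (hpos : ∀ t, 0 ≤ μ t) (heven : ∀ t, μ (-t) = μ t)
    (hbdd : ∃ M, ∀ t, μ t ≤ M) (hint : Integrable μ)
    (hmono : ∀ s t, 0 ≤ s → s ≤ t → μ t ≤ μ s) :
    ∃ c > 0, ∀ x y : ℝ,
      ∑' ν : ℤ, μ (x - ν) * μ (y - ν) ≤ c * μ (|x - y| / 2) := by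
  set I : ℝ := ∫ t, μ t with hI
  have hInn : 0 ≤ I := integral_nonneg hpos
  refine ⟨4 * (μ 0 + I) + 1, by have := hpos 0; linarith, fun x y => ?_⟩
  set d : ℝ := |x - y| / 2 with hd
  have hd0 : 0 ≤ d := by positivity
  obtain ⟨hSx, hTx⟩ := aux_int hpos heven hint hmono x
  obtain ⟨hSy, hTy⟩ := aux_int hpos heven hint hmono y
  -- termwise bound
  have hterm : ∀ ν : ℤ, μ (x - ν) * μ (y - ν) ≤ μ d * (μ (x - ν) + μ (y - ν)) := by
    intro ν
    have htri : |x - y| ≤ |x - ν| + |y - ν| := by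
      have : x - y = (x - ν) - (y - ν) := by ring
      rw [this]
      exact abs_sub _ _
    by_cases hcase : d ≤ |x - (ν : ℝ)|
    · have h1 : μ (x - ν) ≤ μ d := by
        rw [aux_abs heven (x - ν)]
        exact hmono d _ hd0 hcase
      calc μ (x - ν) * μ (y - ν) ≤ μ d * μ (y - ν) :=
            mul_le_mul_of_nonneg_right h1 (hpos _)
        _ ≤ μ d * (μ (x - ν) + μ (y - ν)) := by
            apply mul_le_mul_of_nonneg_left _ (hpos _)
            linarith [hpos (x - ν)]
    · have hcase' : d ≤ |y - (ν : ℝ)| := by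
        push_neg at hcase
        have : 2 * d = |x - y| := by rw [hd]; ring
        linarith
      have h1 : μ (y - ν) ≤ μ d := by
        rw [aux_abs heven (y - ν)]
        exact hmono d _ hd0 hcase'
      calc μ (x - ν) * μ (y - ν) ≤ μ (x - ν) * μ d :=
            mul_le_mul_of_nonneg_left h1 (hpos _)
        _ ≤ μ d * (μ (x - ν) + μ (y - ν)) := by
            rw [mul_comm]
            apply mul_le_mul_of_nonneg_left _ (hpos _)
            linarith [hpos (y - ν)]
  have hSsum : Summable (fun ν : ℤ => μ d * (μ (x - ν) + μ (y - ν))) :=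
    (hSx.add hSy).mul_left (μ d)
  have hSprod : Summable (fun ν : ℤ => μ (x - ν) * μ (y - ν)) :=
    Summable.of_nonneg_of_le (fun ν => mul_nonneg (hpos _) (hpos _)) hterm hSsum
  calc ∑' ν : ℤ, μ (x - ν) * μ (y - ν)
      ≤ ∑' ν : ℤ, μ d * (μ (x - ν) + μ (y - ν)) := Summable.tsum_le_tsum hterm hSprod hSsum
    _ = μ d * ((∑' ν : ℤ, μ (x - ν)) + ∑' ν : ℤ, μ (y - ν)) := by
        rw [tsum_mul_left, Summable.tsum_add hSx hSy]
    _ ≤ μ d * (4 * (μ 0 + I)) := by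
        apply mul_le_mul_of_nonneg_left _ (hpos _)
        linarith
    _ ≤ (4 * (μ 0 + I) + 1) * μ d := by
        rw [mul_comm]
        exact mul_le_mul_of_nonneg_right (by linarith) (hpos _)
end

section
/- Let $\mu : \mathbb{R} \to [0,\infty)$ be even, nonincreasing on $[0,\infty)$, integrable, and satisfy $\int_0^\infty \mu(t)\ln(1+t)\,dt < \infty$. Define $\gamma(x) = \sum_{\kappa \ge 0} 2^\kappa \mu(2^\kappa x)$. Then $\gamma$ is integrable on $(\delta, \infty)$ for every $\delta > 0$. -/
open MeasureTheory
open scoped ENNReal NNReal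

private lemma lint_scale (g : ℝ → ℝ≥0∞) (hg : Measurable g) {c δ : ℝ} (hc : 0 < c) :
    ∫⁻ x in Set.Ioi δ, g (c * x) = ENNReal.ofReal c⁻¹ * ∫⁻ u in Set.Ioi (c * δ), g u := by
  have hpre : (c * ·) ⁻¹' Set.Ioi (c * δ) = Set.Ioi δ := by
    rw [Set.preimage_const_mul_Ioi₀ _ hc, mul_div_cancel_left₀ _ hc.ne']
  have hmap : (volume.restrict (Set.Ioi δ)).map (c * ·)
      = (ENNReal.ofReal c⁻¹) • volume.restrict (Set.Ioi (c * δ)) := by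
    rw [← hpre, ← Measure.restrict_map (measurable_const_mul c) measurableSet_Ioi,
      Real.map_volume_mul_left hc.ne', abs_of_pos (inv_pos.mpr hc),
      Measure.restrict_smul]
  calc ∫⁻ x in Set.Ioi δ, g (c * x)
      = ∫⁻ u, g u ∂((volume.restrict (Set.Ioi δ)).map (c * ·)) :=
        (lintegral_map hg (measurable_const_mul c)).symm
    _ = ENNReal.ofReal c⁻¹ * ∫⁻ u in Set.Ioi (c * δ), g u := by
        rw [hmap, lintegral_smul_measure, smul_eq_mul]

/-- Integrability of `γ(x) = ∑ 2^κ μ(2^κ x)` on `(δ, ∞)` under a logarithmic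
moment condition on `μ`. -/
theorem stmt6 (μ : ℝ → ℝ) (hpos : ∀ t, 0 ≤ μ t) (heven : ∀ t, μ (-t) = μ t)
    (hint : Integrable μ) (hmono : ∀ s t, 0 ≤ s → s ≤ t → μ t ≤ μ s)
    (hlog : IntegrableOn (fun t => μ t * Real.log (1 + t)) (Set.Ici (0:ℝ))) :
    ∀ δ : ℝ, 0 < δ →
      IntegrableOn (fun x => ∑' κ : ℕ, (2:ℝ) ^ κ * μ (2 ^ κ * x)) (Set.Ioi δ) := by
  intro δ hδ
  -- measurability of μ
  have hμm : Measurable μ := by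
    have hanti : Antitone (fun t : ℝ => μ (max t 0)) := fun s t hst =>
      hmono _ _ (le_max_right _ _) (max_le_max hst le_rfl)
    have : μ = fun t => μ (max |t| 0) := by
      funext t
      rcases le_total 0 t with h | h
      · rw [abs_of_nonneg h, max_eq_left h]
      · rw [abs_of_nonpos h, max_eq_left (neg_nonneg.mpr h), heven]
    rw [this]
    exact hanti.measurable.comp measurable_abs
  set ν : ℝ → ℝ≥0∞ := fun t => ENNReal.ofReal (μ t) with hν
  have hνm : Measurable ν := hμm.ennreal_ofReal
  -- the ENNReal version of the sum
  set f : ℕ → ℝ → ℝ≥0∞ := fun κ x => ENNReal.ofReal ((2:ℝ) ^ κ * μ (2 ^ κ * x)) with hf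
  have hfm : ∀ κ, Measurable (f κ) := fun κ =>
    ((hμm.comp (measurable_const_mul _)).const_mul _).ennreal_ofReal
  set G : ℝ → ℝ≥0∞ := fun x => ∑' κ, f κ x with hG
  have hGm : Measurable G := Measurable.ennreal_tsum hfm
  -- the real sum equals toReal of G
  have hFG : (fun x => ∑' κ : ℕ, (2:ℝ) ^ κ * μ (2 ^ κ * x)) = fun x => (G x).toReal := by
    funext x
    set a : ℕ → ℝ := fun κ => (2:ℝ) ^ κ * μ (2 ^ κ * x) with ha
    have hanneg : ∀ κ, 0 ≤ a κ := fun κ =>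
      mul_nonneg (pow_nonneg (by norm_num) _) (hpos _)
    by_cases hs : Summable a
    · have h1 : ENNReal.ofReal (∑' κ, a κ) = G x :=
        ENNReal.ofReal_tsum_of_nonneg hanneg hs
      rw [show (∑' κ : ℕ, (2:ℝ) ^ κ * μ (2 ^ κ * x)) = ∑' κ, a κ from rfl,
        ← ENNReal.toReal_ofReal (tsum_nonneg hanneg), h1]
    · have h0 : (∑' κ : ℕ, (2:ℝ) ^ κ * μ (2 ^ κ * x)) = 0 :=
        tsum_eq_zero_of_not_summable hs
      have hGt : G x = ∞ := by
        by_contra h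
        have hsum : Summable fun κ => ((f κ x)).toReal := ENNReal.summable_toReal h
        have heq : (fun κ => (f κ x).toReal) = a := by
          funext κ; exact ENNReal.toReal_ofReal (hanneg κ)
        rw [heq] at hsum
        exact hs hsum
      rw [h0, hGt]; simp
  -- change of variables for each term
  have hpow : ∀ κ : ℕ, (0:ℝ) < 2 ^ κ := fun κ => pow_pos (by norm_num) _
  have hterm : ∀ κ : ℕ, ∫⁻ x in Set.Ioi δ, f κ x
      = ∫⁻ u in Set.Ioi ((2:ℝ) ^ κ * δ), ν u := by
    intro κ
    have h1 : ∀ x : ℝ, f κ x = ENNReal.ofReal ((2:ℝ)^κ) * ν ((2:ℝ)^κ * x) := fun x =>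
      ENNReal.ofReal_mul (hpow κ).le
    simp only [h1]
    rw [lintegral_const_mul' _ _ ENNReal.ofReal_ne_top,
      lint_scale ν hνm (hpow κ), ← mul_assoc, ← ENNReal.ofReal_mul (hpow κ).le,
      mul_inv_cancel₀ (hpow κ).ne', ENNReal.ofReal_one, one_mul]
  -- constants
  set C₂ : ℝ := (Real.log 2)⁻¹ with hC₂
  set C₁ : ℝ := |Real.log δ| * (Real.log 2)⁻¹ + 1 with hC₁
  have hlog2 : (0:ℝ) < Real.log 2 := Real.log_pos (by norm_num)
  -- pointwise counting bound
  have hcount : ∀ u : ℝ, (∑' κ : ℕ, (Set.Ioi ((2:ℝ)^κ * δ)).indicator ν u)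
      ≤ (Set.Ioi δ).indicator (fun u => ν u * ENNReal.ofReal (C₁ + C₂ * Real.log (1 + u))) u := by
    intro u
    by_cases hu : δ < u
    · rw [Set.indicator_of_mem (Set.mem_Ioi.mpr hu)]
      have hu0 : (0:ℝ) < u := hδ.trans hu
      set B : ℝ := (Real.log u - Real.log δ) / Real.log 2 with hB
      have hBnn : 0 ≤ B := div_nonneg
        (sub_nonneg.mpr ((Real.log_le_log_iff hδ hu0).mpr hu.le)) hlog2.le
      set n : ℕ := ⌊B⌋₊ + 1 with hn
      have hvanish : ∀ κ ∉ Finset.range n, (Set.Ioi ((2:ℝ)^κ * δ)).indicator ν u = 0 := by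
        intro κ hκ
        rw [Finset.mem_range, not_lt] at hκ
        have hκB : B < (κ : ℝ) := lt_of_lt_of_le (Nat.lt_floor_add_one B)
          (by exact_mod_cast hκ)
        have hlog' : Real.log u < Real.log ((2:ℝ)^κ * δ) := by
          rw [Real.log_mul (hpow κ).ne' hδ.ne', Real.log_pow]
          have := (div_lt_iff₀ hlog2).mp hκB
          linarith
        have hlt : u < (2:ℝ)^κ * δ :=
          (Real.log_lt_log_iff hu0 (mul_pos (hpow κ) hδ)).mp hlog'
        exact Set.indicator_of_notMem
          (by simp only [Set.mem_Ioi, not_lt]; exact hlt.le) ν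
      have hnle : (n : ℝ) ≤ C₁ + C₂ * Real.log (1 + u) := by
        have h1 : (n : ℝ) ≤ B + 1 := by
          rw [hn]; push_cast
          have := Nat.floor_le hBnn
          linarith
        have h2 : Real.log u ≤ Real.log (1 + u) :=
          (Real.log_le_log_iff hu0 (by linarith)).mpr (by linarith)
        have h3 : -Real.log δ ≤ |Real.log δ| := neg_le_abs _
        have h4 : B ≤ (Real.log (1 + u) + |Real.log δ|) / Real.log 2 := by
          rw [hB]; gcongr
          linarith
        rw [hC₁, hC₂]
        have h5 : (Real.log (1 + u) + |Real.log δ|) / Real.log 2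
            = (Real.log 2)⁻¹ * Real.log (1 + u) + |Real.log δ| * (Real.log 2)⁻¹ := by
          field_simp
        linarith [h4.trans_eq h5]
      calc (∑' κ : ℕ, (Set.Ioi ((2:ℝ)^κ * δ)).indicator ν u)
          = ∑ κ ∈ Finset.range n, (Set.Ioi ((2:ℝ)^κ * δ)).indicator ν u :=
            tsum_eq_sum hvanish
        _ ≤ ∑ _κ ∈ Finset.range n, ν u :=
            Finset.sum_le_sum (fun κ _ => Set.indicator_le_self _ _ u)
        _ = (n : ℝ≥0∞) * ν u := by
            rw [Finset.sum_const, Finset.card_range, nsmul_eq_mul]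
        _ ≤ ENNReal.ofReal (C₁ + C₂ * Real.log (1 + u)) * ν u := by
            apply mul_le_mul_left
            rw [← ENNReal.ofReal_natCast]
            exact ENNReal.ofReal_le_ofReal hnle
        _ = ν u * ENNReal.ofReal (C₁ + C₂ * Real.log (1 + u)) := mul_comm _ _
    · rw [Set.indicator_of_notMem (fun h => hu (Set.mem_Ioi.mp h))]
      have hz : ∀ κ : ℕ, (Set.Ioi ((2:ℝ)^κ * δ)).indicator ν u = 0 := by
        intro κ
        apply Set.indicator_of_notMem
        simp only [Set.mem_Ioi, not_lt]
        calc u ≤ δ := not_lt.mp hu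
          _ ≤ (2:ℝ)^κ * δ := le_mul_of_one_le_left hδ.le (one_le_pow₀ (by norm_num))
      simp [hz]
  -- finiteness of the lintegral of G
  have hI : ∫⁻ x in Set.Ioi δ, G x < ∞ := by
    rw [hG, lintegral_tsum (fun κ => (hfm κ).aemeasurable)]
    have h2 : ∀ κ : ℕ, ∫⁻ x in Set.Ioi δ, f κ x
        = ∫⁻ u, (Set.Ioi ((2:ℝ)^κ * δ)).indicator ν u := by
      intro κ; rw [hterm κ, ← lintegral_indicator measurableSet_Ioi]
    simp_rw [h2]
    rw [← lintegral_tsum (fun κ => ((hνm.indicator measurableSet_Ioi)).aemeasurable)]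
    have step1 : ∫⁻ u, ∑' κ : ℕ, (Set.Ioi ((2:ℝ)^κ*δ)).indicator ν u
        ≤ ∫⁻ u in Set.Ioi δ, ν u * ENNReal.ofReal (C₁ + C₂ * Real.log (1 + u)) := by
      rw [← lintegral_indicator measurableSet_Ioi]
      exact lintegral_mono hcount
    have step2 : ∫⁻ u in Set.Ioi δ, ν u * ENNReal.ofReal (C₁ + C₂ * Real.log (1 + u))
        ≤ ∫⁻ u in Set.Ioi δ, (ENNReal.ofReal (C₁ * μ u)
            + ENNReal.ofReal (C₂ * (μ u * Real.log (1 + u)))) := by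
      apply setLIntegral_mono' measurableSet_Ioi
      intro u hu
      have hu0 : (0:ℝ) < u := hδ.trans hu
      calc ν u * ENNReal.ofReal (C₁ + C₂ * Real.log (1 + u))
          = ENNReal.ofReal (μ u * (C₁ + C₂ * Real.log (1 + u))) :=
            (ENNReal.ofReal_mul (hpos u)).symm
        _ = ENNReal.ofReal (C₁ * μ u + C₂ * (μ u * Real.log (1 + u))) := by ring_nf
        _ ≤ _ := ENNReal.ofReal_add_le
    have int1 : IntegrableOn (fun u => C₁ * μ u) (Set.Ioi δ) :=
      hint.integrableOn.const_mul C₁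
    have int2 : IntegrableOn (fun u => C₂ * (μ u * Real.log (1 + u))) (Set.Ioi δ) :=
      (hlog.mono_set (fun x hx => (hδ.trans hx).le)).const_mul C₂
    have step3 : ∫⁻ u in Set.Ioi δ, (ENNReal.ofReal (C₁ * μ u)
        + ENNReal.ofReal (C₂ * (μ u * Real.log (1 + u)))) < ∞ := by
      rw [lintegral_add_left ((hμm.const_mul C₁).ennreal_ofReal)]
      exact ENNReal.add_lt_top.mpr ⟨int1.lintegral_lt_top, int2.lintegral_lt_top⟩
    exact lt_of_le_of_lt (step1.trans step2) step3
  -- conclude integrability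
  rw [hFG]
  refine ⟨(hGm.ennreal_toReal).aestronglyMeasurable, ?_⟩
  rw [hasFiniteIntegral_iff_ofReal (ae_of_all _ fun x => ENNReal.toReal_nonneg)]
  calc ∫⁻ x in Set.Ioi δ, ENNReal.ofReal (G x).toReal
      ≤ ∫⁻ x in Set.Ioi δ, G x := lintegral_mono fun x => ENNReal.ofReal_toReal_le
    _ < ∞ := hI
end
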